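/- In the single-centre setup with potential U₁(x) = V(‖x−c‖) + F·x_n for 0 < ‖x−c‖ < a and U₁(x) = F·x_n for ‖x−c‖ ≥ a, let p = (Πc, y₁) be the lowest point of the inner turning set S = {x : 0 < ‖x−c‖ < a, U₁(x) = E} and let q = c − a·e_n be the lowest point of the sphere ∂B(c,a). Then for every C¹ path γ:[0,1]→ℝⁿ with γ(0) ∈ S and γ(1) ∈ ∂B(c,a) one has L_A(γ) ≥ L_A(g), where g(t) = p + t·(q − p) is the straight radial segment from p to q; in particular the Agmon distance satisfies ρ_E(S, ∂B(c,a)) = L_A(g). -/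

import Mathlib

open MeasureTheory Filter

/-- The Agmon length of a `C¹` path for mass `m`, energy `E`, potential `U`. -/
noncomputable def agmonLength {n : ℕ} (m E : ℝ) (U : EuclideanSpace ℝ (Fin n) → ℝ)
    (γ : ℝ → EuclideanSpace ℝ (Fin n)) : ℝ :=
  Real.sqrt (2 * m) * ∫ t in (0:ℝ)..1, Real.sqrt (max (U (γ t) - E) 0) * ‖deriv γ t‖

/-- The Agmon distance between two sets: the infimum of the Agmon length over `C¹`
paths starting in `A` and ending in `B`. -/
noncomputable def agmonDist {n : ℕ} (m E : ℝ) (U : EuclideanSpace ℝ (Fin n) → ℝ)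
    (A B : Set (EuclideanSpace ℝ (Fin n))) : ℝ :=
  sInf {L : ℝ | ∃ γ : ℝ → EuclideanSpace ℝ (Fin n),
    ContDiff ℝ 1 γ ∧ γ 0 ∈ A ∧ γ 1 ∈ B ∧ L = agmonLength m E U γ}

open Set Topology

/-!
Let `w(s) = V(s) + F (cₙ - s) - E`, the value of `U₁ - E` at the lowest point `c - s eₙ` of the
sphere of radius `s` about `c`; thus `U₁ x - E ≥ w ‖x - c‖`. If `Φ' = f := √(max w 0)`, then along
a `C¹` path `γ` the function `Φ ‖γ t - c‖` grows at rate at most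
`f ‖γ t - c‖ ‖γ' t‖ ≤ √(max (U₁ (γ t) - E) 0) ‖γ' t‖`, the norm being `1`-Lipschitz; where `γ`
passes through `c` this needs `f` continuous with `f 0 = 0`, true because `V → -∞` at `0`. Hence
`L_A(γ) ≥ √(2m) ∫_{‖γ 0 - c‖}^{a} f` for every path ending on the sphere. By the minimality of
`y₁` and the intermediate value theorem `w > 0` on `(cₙ - y₁, a]`, so the turning set lies in the
closed ball of radius `cₙ - y₁` and the bound is at least `√(2m) ∫_{cₙ - y₁}^{a} f`. This is the
Agmon length of the radial segment, which runs down the ray on which `U₁ - E = w`.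
-/

section RadialBound

variable {X : Type*} [NormedAddCommGroup X]

lemma HasDerivAt.hasDerivAt_comp_norm_sub_of_eq [NormedSpace ℝ X] {Φ : ℝ → ℝ}
    (hΦ : HasDerivAt Φ 0 0) {γ : ℝ → X} {γ' : X} {t : ℝ} (hγ : HasDerivAt γ γ' t) {c : X}
    (hc : γ t = c) : HasDerivAt (fun u => Φ ‖γ u - c‖) 0 t := by
  subst hc
  rw [hasDerivAt_iff_isLittleO] at hΦ ⊢
  simp only [sub_zero, smul_zero, sub_self, norm_zero] at hΦ ⊢
  have hr : Tendsto (fun u => ‖γ u - γ t‖) (𝓝 t) (𝓝 0) := by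
    simpa using (hγ.continuousAt.tendsto.sub_const (γ t)).norm
  -- `Φ y = o(y)` at `0` and `‖γ u - γ t‖ = O(u - t)` at `t`
  exact (hΦ.comp_tendsto hr).trans_isBigO hγ.isBigO_sub.norm_left

variable [InnerProductSpace ℝ X]

lemma HasDerivAt.exists_hasDerivAt_norm_sub_le {γ : ℝ → X} {γ' : X} {t : ℝ}
    (hγ : HasDerivAt γ γ' t) {c : X} (hc : γ t ≠ c) :
    ∃ r', HasDerivAt (fun u => ‖γ u - c‖) r' t ∧ r' ≤ ‖γ'‖ := by
  set L := fderiv ℝ (‖·‖) (γ t - c)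
  have hL : HasFDerivAt (‖·‖) L (γ t - c) :=
    ((contDiffAt_norm ℝ (sub_ne_zero.2 hc)).differentiableAt one_ne_zero).hasFDerivAt
  refine ⟨L γ', hL.comp_hasDerivAt t (hγ.sub_const c), ?_⟩
  calc L γ' ≤ ‖L γ'‖ := Real.le_norm_self _
    _ ≤ ‖L‖ * ‖γ'‖ := L.le_opNorm γ'
    _ ≤ 1 * ‖γ'‖ := by
        gcongr
        simpa using norm_fderiv_le_of_lipschitz ℝ (lipschitzWith_one_norm (E := X)) (x₀ := γ t - c)
    _ = ‖γ'‖ := one_mul _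

theorem integral_le_integral_mul_norm_deriv {f : ℝ → ℝ} (hf : Continuous f) (hf_nonneg : 0 ≤ f)
    (hf_zero : f 0 = 0) {γ : ℝ → X} (hγ : ContDiff ℝ 1 γ) (c : X) {a b : ℝ} (hab : a ≤ b) :
    ∫ s in ‖γ a - c‖..‖γ b - c‖, f s ≤ ∫ t in a..b, f ‖γ t - c‖ * ‖deriv γ t‖ := by
  set Φ : ℝ → ℝ := fun y => ∫ s in ‖γ a - c‖..y, f s
  have hΦ : ∀ y, HasDerivAt Φ (f y) y := fun y => (hf.integral_hasStrictDerivAt _ y).hasDerivAt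
  have hγ' : ∀ t, HasDerivAt γ (deriv γ t) t :=
    fun t => ((hγ.differentiable one_ne_zero) t).hasDerivAt
  have hderiv : ∀ t, ∃ g', HasDerivAt (fun u => Φ ‖γ u - c‖) g' t ∧
      g' ≤ f ‖γ t - c‖ * ‖deriv γ t‖ := by
    intro t
    by_cases hc : γ t = c
    · refine ⟨0, (hf_zero ▸ hΦ 0).hasDerivAt_comp_norm_sub_of_eq (hγ' t) hc, ?_⟩
      exact mul_nonneg (hf_nonneg _) (norm_nonneg _)
    · obtain ⟨r', hr', hr'_le⟩ := (hγ' t).exists_hasDerivAt_norm_sub_le hc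
      exact ⟨_, (hΦ _).comp t hr', mul_le_mul_of_nonneg_left hr'_le (hf_nonneg _)⟩
  choose g' hg' hg'_le using hderiv
  have hbound := intervalIntegral.sub_le_integral_of_hasDeriv_right_of_le hab
    (fun t _ => (hg' t).continuousAt.continuousWithinAt) (fun t _ => (hg' t).hasDerivWithinAt)
    ((hf.comp (hγ.continuous.sub continuous_const).norm).mul
      (hγ.continuous_deriv le_rfl).norm).integrableOn_Icc (fun t _ => hg'_le t)
  simpa [Φ] using hbound

end RadialBound

section AgmonLength

variable {k : ℕ}

lemma agmonDist_eq_agmonLength_of_le {m E : ℝ} {U : EuclideanSpace ℝ (Fin k) → ℝ}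
    {A B : Set (EuclideanSpace ℝ (Fin k))} {γ₀ : ℝ → EuclideanSpace ℝ (Fin k)}
    (hγ₀ : ContDiff ℝ 1 γ₀) (h₀ : γ₀ 0 ∈ A) (h₁ : γ₀ 1 ∈ B)
    (hle : ∀ γ : ℝ → EuclideanSpace ℝ (Fin k), ContDiff ℝ 1 γ → γ 0 ∈ A → γ 1 ∈ B →
      agmonLength m E U γ₀ ≤ agmonLength m E U γ) :
    agmonDist m E U A B = agmonLength m E U γ₀ :=
  IsLeast.csInf_eq ⟨⟨γ₀, hγ₀, h₀, h₁, rfl⟩, by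
    rintro _ ⟨γ, hγ, hγ0, hγ1, rfl⟩
    exact hle γ hγ hγ0 hγ1⟩

lemma agmonLength_segment_along_ray (m E : ℝ) (U : EuclideanSpace ℝ (Fin k) → ℝ)
    (c e : EuclideanSpace ℝ (Fin k)) (he : ‖e‖ = 1) {r₀ r₁ : ℝ} (h : r₀ ≤ r₁) :
    agmonLength m E U (fun t => (c - r₀ • e) + t • ((c - r₁ • e) - (c - r₀ • e))) =
      √(2 * m) * ∫ s in r₀..r₁, √(max (U (c - s • e) - E) 0) := by
  have hderiv : ∀ t : ℝ,
      deriv (fun t : ℝ => (c - r₀ • e) + t • ((c - r₁ • e) - (c - r₀ • e))) t =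
        (c - r₁ • e) - (c - r₀ • e) := fun t => by
    simpa using (((hasDerivAt_id t).smul_const ((c - r₁ • e) - (c - r₀ • e))).const_add
      (c - r₀ • e)).deriv
  have hnorm : ‖(c - r₁ • e) - (c - r₀ • e)‖ = r₁ - r₀ := by
    rw [show (c - r₁ • e) - (c - r₀ • e) = (r₀ - r₁) • e by module, norm_smul, he, mul_one,
      Real.norm_eq_abs, abs_of_nonpos (by linarith)]
    ring
  have hpt : ∀ t : ℝ, (c - r₀ • e) + t • ((c - r₁ • e) - (c - r₀ • e)) =
      c - ((r₁ - r₀) * t + r₀) • e := fun t => by module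
  simp only [agmonLength, hderiv, hnorm]
  simp only [hpt]
  rw [intervalIntegral.integral_mul_const, mul_comm _ (r₁ - r₀),
    intervalIntegral.mul_integral_comp_mul_add (f := fun s => √(max (U (c - s • e) - E) 0))]
  simp

lemma intervalIntegrable_agmon_integrand {U : EuclideanSpace ℝ (Fin k) → ℝ} (hU : Measurable U)
    {G : EuclideanSpace ℝ (Fin k) → ℝ} (hG : Continuous G) (hUG : ∀ x, U x ≤ G x) (E : ℝ)
    {γ : ℝ → EuclideanSpace ℝ (Fin k)} (hγ : ContDiff ℝ 1 γ) (a b : ℝ) :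
    IntervalIntegrable (fun t => √(max (U (γ t) - E) 0) * ‖deriv γ t‖) volume a b := by
  have hγ' : Continuous (deriv γ) := hγ.continuous_deriv le_rfl
  have hdom : Continuous fun t => √(max (G (γ t) - E) 0) * ‖deriv γ t‖ :=
    ((((hG.comp hγ.continuous).sub continuous_const).max continuous_const).sqrt).mul hγ'.norm
  have hmeas : Measurable fun t => √(max (U (γ t) - E) 0) * ‖deriv γ t‖ :=
    ((((hU.comp hγ.continuous.measurable).sub_const E).max measurable_const).sqrt).mul
      hγ'.measurable.norm
  refine (hdom.intervalIntegrable a b).mono_fun hmeas.aestronglyMeasurable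
    (ae_of_all _ fun t => ?_)
  simp only [Real.norm_eq_abs, abs_mul, abs_norm, abs_of_nonneg (Real.sqrt_nonneg _)]
  gcongr
  exact hUG _

lemma sqrt_two_mul_integral_le_agmonLength (m E : ℝ) {U : EuclideanSpace ℝ (Fin k) → ℝ}
    (hU : Measurable U) {G : EuclideanSpace ℝ (Fin k) → ℝ} (hG : Continuous G)
    (hUG : ∀ x, U x ≤ G x) {f : ℝ → ℝ} (hf : Continuous f) (hf_nonneg : 0 ≤ f) (hf_zero : f 0 = 0)
    {c : EuclideanSpace ℝ (Fin k)} (hfU : ∀ x, f ‖x - c‖ ≤ √(max (U x - E) 0))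
    {γ : ℝ → EuclideanSpace ℝ (Fin k)} (hγ : ContDiff ℝ 1 γ) :
    √(2 * m) * ∫ s in ‖γ 0 - c‖..‖γ 1 - c‖, f s ≤ agmonLength m E U γ := by
  refine mul_le_mul_of_nonneg_left ?_ (Real.sqrt_nonneg _)
  refine (integral_le_integral_mul_norm_deriv hf hf_nonneg hf_zero hγ c zero_le_one).trans ?_
  refine intervalIntegral.integral_mono_on zero_le_one ?_
    (intervalIntegrable_agmon_integrand hU hG hUG E hγ 0 1) fun t _ => ?_
  · exact ((hf.comp (hγ.continuous.sub continuous_const).norm).mul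
      (hγ.continuous_deriv le_rfl).norm).intervalIntegrable 0 1
  · exact mul_le_mul_of_nonneg_right (hfU _) (norm_nonneg _)

end AgmonLength

lemma EuclideanSpace.eq_sub_smul_single_of_eq_update {k : ℕ} {c p : EuclideanSpace ℝ (Fin k)}
    {i : Fin k} {y : ℝ} (hp : p = Function.update c i y) :
    p = c - (c i - y) • EuclideanSpace.single i 1 := by
  ext j
  rcases eq_or_ne j i with rfl | hj
  · simp [hp]
  · simp [hp, hj]

lemma continuousOn_Ioi_of_continuousOn_Ioo_of_tendsto_zero {V : ℝ → ℝ} {a : ℝ}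
    (hV : ContinuousOn V (Ioo 0 a)) (hedge : Tendsto V (𝓝[<] a) (𝓝 0))
    (hout : ∀ s, a ≤ s → V s = 0) : ContinuousOn V (Ioi 0) := by
  intro s (hs : 0 < s)
  rcases lt_trichotomy s a with hsa | rfl | hsa
  · exact (hV.continuousAt (Ioo_mem_nhds hs hsa)).continuousWithinAt
  · refine (continuousAt_iff_continuous_left_right.2 ⟨?_, ?_⟩).continuousWithinAt
    · rw [← continuousWithinAt_Iio_iff_Iic, ContinuousWithinAt, hout s le_rfl]
      exact hedge
    · exact continuousWithinAt_const.congr (fun u hu => hout u hu) (hout s le_rfl)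
  · exact (continuousAt_const.congr (eventually_gt_nhds hsa |>.mono
      fun u hu => (hout u hu.le).symm)).continuousWithinAt

section SingleCentre

variable {k : ℕ} {V : ℝ → ℝ} {F E : ℝ}

noncomputable def singleCentrePotential (V : ℝ → ℝ) (F : ℝ) (c : EuclideanSpace ℝ (Fin k))
    (i : Fin k) (x : EuclideanSpace ℝ (Fin k)) : ℝ :=
  V ‖x - c‖ + F * x i

/-- `singleCentrePotential V F c i - E` at the lowest point `c - s • eᵢ` of the sphere of
radius `s` about `c`, with `h = c i`. -/
def radialExcess (V : ℝ → ℝ) (F h E s : ℝ) : ℝ := V s + F * (h - s) - E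

/-- Cut off at `s ≤ 0`, where `V` is not controlled. -/
noncomputable def radialDensity (V : ℝ → ℝ) (F h E : ℝ) : ℝ → ℝ :=
  (Ioi 0).indicator fun s => √(max (radialExcess V F h E s) 0)

lemma measurable_singleCentrePotential (hV : ContinuousOn V (Ioi 0)) (F : ℝ)
    (c : EuclideanSpace ℝ (Fin k)) (i : Fin k) : Measurable (singleCentrePotential V F c i) := by
  refine measurable_of_continuousOn_compl_singleton c fun x hx => ?_
  have hx : 0 < ‖x - c‖ := norm_pos_iff.2 (sub_ne_zero.2 hx)
  have hVx : ContinuousAt (fun y : EuclideanSpace ℝ (Fin k) => V ‖y - c‖) x :=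
    (hV.continuousAt (Ioi_mem_nhds hx)).comp (f := fun y => ‖y - c‖) (by fun_prop)
  have hlin : Continuous fun y : EuclideanSpace ℝ (Fin k) => F * y i := by fun_prop
  exact (hVx.add hlin.continuousAt).continuousWithinAt

lemma singleCentrePotential_le (hV : ∀ s, 0 < s → V s ≤ 0) (c x : EuclideanSpace ℝ (Fin k))
    (i : Fin k) : singleCentrePotential V F c i x ≤ max (V 0) 0 + F * x i := by
  unfold singleCentrePotential
  rcases (norm_nonneg (x - c)).eq_or_lt with h | h
  · rw [← h]; linarith [le_max_left (V 0) 0]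
  · linarith [hV _ h, le_max_right (V 0) 0]

lemma radialExcess_le_singleCentrePotential (hF : 0 ≤ F) (c x : EuclideanSpace ℝ (Fin k))
    (i : Fin k) : radialExcess V F (c i) E ‖x - c‖ ≤ singleCentrePotential V F c i x - E := by
  have h := (abs_le.1 (PiLp.norm_apply_le (x - c) i)).1
  simp only [PiLp.sub_apply] at h
  unfold radialExcess singleCentrePotential
  nlinarith

lemma singleCentrePotential_sub_smul_single {s : ℝ} (hs : 0 ≤ s) (c : EuclideanSpace ℝ (Fin k))
    (i : Fin k) :
    singleCentrePotential V F c i (c - s • EuclideanSpace.single i 1) - E =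
      radialExcess V F (c i) E s := by
  simp [singleCentrePotential, radialExcess, norm_smul, abs_of_nonneg hs]

lemma radialDensity_norm_sub_le (hF : 0 ≤ F) (c x : EuclideanSpace ℝ (Fin k)) (i : Fin k) :
    radialDensity V F (c i) E ‖x - c‖ ≤ √(max (singleCentrePotential V F c i x - E) 0) := by
  unfold radialDensity
  by_cases hx : 0 < ‖x - c‖
  · rw [indicator_of_mem (show ‖x - c‖ ∈ Ioi 0 from hx)]
    gcongr
    exact radialExcess_le_singleCentrePotential hF c x i
  · rw [indicator_of_notMem (show ‖x - c‖ ∉ Ioi 0 from hx)]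
    exact Real.sqrt_nonneg _

lemma continuous_radialDensity (hV : ContinuousOn V (Ioi 0)) (hsing : Tendsto V (𝓝[>] 0) atBot)
    (F h E : ℝ) : Continuous (radialDensity V F h E) := by
  have hg : ContinuousOn (radialExcess V F h E) (Ioi 0) := by
    unfold radialExcess; fun_prop
  have hbot : Tendsto (radialExcess V F h E) (𝓝[>] 0) atBot := by
    have : Tendsto (fun s : ℝ => F * (h - s) - E) (𝓝[>] 0) (𝓝 (F * (h - 0) - E)) :=
      (by fun_prop : Continuous fun s : ℝ => F * (h - s) - E).continuousWithinAt
    exact (hsing.atBot_add this).congr fun s => by simp only [radialExcess]; ring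
  obtain ⟨δ, hδ, hneg⟩ := mem_nhdsGT_iff_exists_Ioo_subset.1 (hbot.eventually_le_atBot 0)
  have hzero : EqOn (radialDensity V F h E) 0 (Iio δ) := fun s hs => by
    by_cases h0 : 0 < s
    · have : radialExcess V F h E s ≤ 0 := hneg ⟨h0, hs⟩
      simp [radialDensity, indicator_of_mem (show s ∈ Ioi 0 from h0), this]
    · simp [radialDensity, indicator_of_notMem (show s ∉ Ioi 0 from h0)]
  have hpos : ContinuousOn (radialDensity V F h E) (Ioi 0) :=
    (hg.sup continuousOn_const).sqrt.congr fun s hs => indicator_of_mem hs _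
  rw [← continuousOn_univ, ← Iio_union_Ioi_of_lt hδ]
  exact (continuousOn_const.congr hzero).union_of_isOpen hpos isOpen_Iio isOpen_Ioi

lemma radialExcess_pos_of_isLeast {a h y₁ : ℝ} (hV : ContinuousOn V (Ioi 0)) (hVa : V a = 0)
    (hEa : E < F * (h - a))
    (hy₁ : IsLeast {y | y ∈ Ioo (h - a) h ∧ V |y - h| + F * y = E} y₁) :
    ∀ s ∈ Ioc (h - y₁) a, 0 < radialExcess V F h E s := by
  have ha_pos : 0 < radialExcess V F h E a := by simp only [radialExcess, hVa]; linarith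
  rintro s ⟨hs₁, hsa⟩
  by_contra! hs
  have hs₀ : 0 < s := by linarith [hy₁.1.1.2]
  have hcont : ContinuousOn (radialExcess V F h E) (Icc s a) := by
    have := hV.mono fun u (hu : u ∈ Icc s a) => hs₀.trans_le hu.1
    unfold radialExcess; fun_prop
  -- a zero `z` of the excess in `(s, a)` yields the root `h - z < y₁`
  obtain ⟨z, hz, hz₀⟩ := intermediate_value_Icc hsa hcont ⟨hs, ha_pos.le⟩
  have hza : z < a := hz.2.lt_of_ne (by rintro rfl; linarith)
  have hroot : h - z ∈ {y | y ∈ Ioo (h - a) h ∧ V |y - h| + F * y = E} := by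
    refine ⟨⟨by linarith, by linarith [hz.1]⟩, ?_⟩
    rw [show h - z - h = -z by ring, abs_neg, abs_of_pos (hs₀.trans_le hz.1)]
    simp only [radialExcess] at hz₀; linarith
  linarith [hy₁.2 hroot, hz.1]

lemma norm_sub_le_of_radialExcess_pos (hF : 0 ≤ F) {c x : EuclideanSpace ℝ (Fin k)} {i : Fin k}
    {r a : ℝ} (hpos : ∀ s ∈ Ioc r a, 0 < radialExcess V F (c i) E s) (hxa : ‖x - c‖ ≤ a)
    (hxE : singleCentrePotential V F c i x ≤ E) : ‖x - c‖ ≤ r := by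
  by_contra! hr
  linarith [hpos _ ⟨hr, hxa⟩, radialExcess_le_singleCentrePotential (V := V) (E := E) hF c x i]

lemma sqrt_two_mul_integral_radialDensity_le_agmonLength (m : ℝ) (hF : 0 ≤ F)
    (hV : ContinuousOn V (Ioi 0)) (hVneg : ∀ s, 0 < s → V s ≤ 0)
    (hsing : Tendsto V (𝓝[>] 0) atBot) (c : EuclideanSpace ℝ (Fin k)) (i : Fin k)
    {γ : ℝ → EuclideanSpace ℝ (Fin k)} (hγ : ContDiff ℝ 1 γ) {r : ℝ} (h₀ : ‖γ 0 - c‖ ≤ r)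
    (h₁ : r ≤ ‖γ 1 - c‖) :
    √(2 * m) * ∫ s in r..‖γ 1 - c‖, radialDensity V F (c i) E s ≤
      agmonLength m E (singleCentrePotential V F c i) γ := by
  have hf := continuous_radialDensity hV hsing F (c i) E
  have hf_nonneg : 0 ≤ radialDensity V F (c i) E :=
    indicator_nonneg fun _ _ => Real.sqrt_nonneg _
  refine le_trans ?_ (sqrt_two_mul_integral_le_agmonLength m E
    (measurable_singleCentrePotential hV F c i) (G := fun x => max (V 0) 0 + F * x i)
    (by fun_prop) (singleCentrePotential_le hVneg c · i) hf hf_nonneg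
    (indicator_of_notMem (lt_irrefl 0) _) (radialDensity_norm_sub_le hF c · i) hγ)
  gcongr
  exact intervalIntegral.integral_mono_interval h₀ h₁ le_rfl (ae_of_all _ hf_nonneg)
    (hf.intervalIntegrable _ _)

lemma agmonLength_radialSegment (m : ℝ) (c : EuclideanSpace ℝ (Fin k)) (i : Fin k) {r₀ r₁ : ℝ}
    (h₀ : 0 < r₀) (h : r₀ ≤ r₁) :
    agmonLength m E (singleCentrePotential V F c i)
      (fun t => (c - r₀ • EuclideanSpace.single i 1) +
        t • ((c - r₁ • EuclideanSpace.single i 1) - (c - r₀ • EuclideanSpace.single i 1))) =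
      √(2 * m) * ∫ s in r₀..r₁, radialDensity V F (c i) E s := by
  rw [agmonLength_segment_along_ray m E _ c _ (by simp) h]
  congr 1
  refine intervalIntegral.integral_congr fun s hs => ?_
  rw [uIcc_of_le h] at hs
  have hs₀ : 0 < s := h₀.trans_le hs.1
  rw [singleCentrePotential_sub_smul_single hs₀.le, radialDensity,
    indicator_of_mem (show s ∈ Ioi 0 from hs₀)]

end SingleCentre

theorem radial_segment_is_shortest_geodesic_general
    (n : ℕ) (m F E a : ℝ) (hF : 0 < F) (ha : 0 < a)
    (c : EuclideanSpace ℝ (Fin (n + 2)))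
    (hhalf : E / F < c (Fin.last (n + 1)) - a)
    (V : ℝ → ℝ)
    (hVcont : ContinuousOn V (Set.Ioo 0 a))
    (hVneg : ∀ s ∈ Set.Ioo 0 a, V s < 0)
    (hVsing : Tendsto V (nhdsWithin 0 (Set.Ioi 0)) atBot)
    (hVedge : Tendsto V (nhdsWithin a (Set.Iio a)) (nhds 0))
    (hVout : ∀ s : ℝ, a ≤ s → V s = 0)
    (U₁ : EuclideanSpace ℝ (Fin (n + 2)) → ℝ)
    (hU₁ : ∀ x, U₁ x = V ‖x - c‖ + F * x (Fin.last (n + 1)))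
    (S : Set (EuclideanSpace ℝ (Fin (n + 2))))
    (hS : S = {x | ‖x - c‖ ∈ Set.Ioo 0 a ∧ U₁ x = E})
    (y₁ : ℝ)
    (hy₁ : IsLeast {y | y ∈ Set.Ioo (c (Fin.last (n + 1)) - a) (c (Fin.last (n + 1))) ∧
      V |y - c (Fin.last (n + 1))| + F * y = E} y₁)
    (p q : EuclideanSpace ℝ (Fin (n + 2)))
    (hp : p = Function.update c (Fin.last (n + 1)) y₁)
    (hq : q = c - a • EuclideanSpace.single (Fin.last (n + 1)) (1 : ℝ)) :
    (∀ γ : ℝ → EuclideanSpace ℝ (Fin (n + 2)), ContDiff ℝ 1 γ →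
      γ 0 ∈ S → γ 1 ∈ Metric.sphere c a →
      agmonLength m E U₁ (fun t => p + t • (q - p)) ≤ agmonLength m E U₁ γ) ∧
    agmonDist m E U₁ S (Metric.sphere c a) =
      agmonLength m E U₁ (fun t => p + t • (q - p)) := by
  set N := Fin.last (n + 1)
  set r₁ := c N - y₁
  have hU : U₁ = singleCentrePotential V F c N := funext hU₁
  have hr₁ : r₁ ∈ Ioo 0 a := ⟨by linarith [hy₁.1.1.2], by linarith [hy₁.1.1.1]⟩
  replace hp : p = c - r₁ • EuclideanSpace.single N 1 :=
    EuclideanSpace.eq_sub_smul_single_of_eq_update hp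
  have hV := continuousOn_Ioi_of_continuousOn_Ioo_of_tendsto_zero hVcont hVedge hVout
  have hpos := radialExcess_pos_of_isLeast hV (hVout a le_rfl)
    (by rwa [div_lt_iff₀ hF, mul_comm] at hhalf) hy₁
  have hle : ∀ γ : ℝ → EuclideanSpace ℝ (Fin (n + 2)), ContDiff ℝ 1 γ → γ 0 ∈ S →
      γ 1 ∈ Metric.sphere c a →
      agmonLength m E U₁ (fun t => p + t • (q - p)) ≤ agmonLength m E U₁ γ := by
    rintro γ hγ h₀ h₁
    rw [hS, hU] at h₀
    rw [mem_sphere_iff_norm] at h₁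
    rw [hU, hp, hq, agmonLength_radialSegment m c N hr₁.1 hr₁.2.le, ← h₁]
    exact sqrt_two_mul_integral_radialDensity_le_agmonLength m hF.le hV
      (fun s hs => (lt_or_ge s a).elim (fun h => (hVneg s ⟨hs, h⟩).le) fun h => (hVout s h).le)
      hVsing c N hγ (norm_sub_le_of_radialExcess_pos hF.le hpos h₀.1.2.le h₀.2.le)
      (h₁ ▸ hr₁.2.le)
  refine ⟨hle, agmonDist_eq_agmonLength_of_le (by fun_prop) ?_ ?_ hle⟩
  · have hroot : V r₁ + F * y₁ = E := by
      rw [← abs_of_pos hr₁.1, abs_sub_comm]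
      exact hy₁.1.2
    have hpE : U₁ p - E = V r₁ + F * y₁ - E := by
      rw [hU, hp, singleCentrePotential_sub_smul_single hr₁.1.le, radialExcess, sub_sub_cancel]
    simp only [zero_smul, add_zero, hS, mem_ofPred_eq]
    exact ⟨by simpa [hp, norm_smul, abs_of_pos hr₁.1] using hr₁, by linarith⟩
  · simp [hq, norm_smul, abs_of_pos ha]

/-- Single-centre setup in `ℝ^{n+2}` with potential
`U₁(x) = V(‖x−c‖) + F xₙ` (where `V ≡ 0` on `[a,∞)`), lowest point `p = (Πc, y₁)` of the
inner turning set `S` and lowest point `q = c − a eₙ` of the sphere `∂B(c,a)`.  For every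
`C¹` path `γ` from `S` to `∂B(c,a)` one has `L_A(γ) ≥ L_A(g)`, where
`g(t) = p + t (q − p)` is the straight radial segment; in particular
`ρ_E(S, ∂B(c,a)) = L_A(g)`. -/
theorem radial_segment_is_shortest_geodesic
    (n : ℕ) (m F E a : ℝ) (hm : 0 < m) (hF : 0 < F) (hE : E < 0) (ha : 0 < a)
    (c : EuclideanSpace ℝ (Fin (n + 2)))
    (hhalf : E / F < c (Fin.last (n + 1)) - a)
    (V : ℝ → ℝ)
    (hVcont : ContinuousOn V (Set.Ioo 0 a))
    (hVdiff : DifferentiableOn ℝ V (Set.Ioo 0 a))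
    (hVmono : StrictMonoOn V (Set.Ioo 0 a))
    (hVneg : ∀ s ∈ Set.Ioo 0 a, V s < 0)
    (hVsing : Tendsto V (nhdsWithin 0 (Set.Ioi 0)) atBot)
    (hVedge : Tendsto V (nhdsWithin a (Set.Iio a)) (nhds 0))
    (hVout : ∀ s : ℝ, a ≤ s → V s = 0)
    (U₁ : EuclideanSpace ℝ (Fin (n + 2)) → ℝ)
    (hU₁ : ∀ x, U₁ x = V ‖x - c‖ + F * x (Fin.last (n + 1)))
    (S : Set (EuclideanSpace ℝ (Fin (n + 2))))
    (hS : S = {x | ‖x - c‖ ∈ Set.Ioo 0 a ∧ U₁ x = E})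
    (y₁ : ℝ)
    (hy₁ : IsLeast {y | y ∈ Set.Ioo (c (Fin.last (n + 1)) - a) (c (Fin.last (n + 1))) ∧
      V |y - c (Fin.last (n + 1))| + F * y = E} y₁)
    (p q : EuclideanSpace ℝ (Fin (n + 2)))
    (hp : p = Function.update c (Fin.last (n + 1)) y₁)
    (hq : q = c - a • EuclideanSpace.single (Fin.last (n + 1)) (1 : ℝ)) :
    (∀ γ : ℝ → EuclideanSpace ℝ (Fin (n + 2)), ContDiff ℝ 1 γ →
      γ 0 ∈ S → γ 1 ∈ Metric.sphere c a →
      agmonLength m E U₁ (fun t => p + t • (q - p)) ≤ agmonLength m E U₁ γ) ∧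
    agmonDist m E U₁ S (Metric.sphere c a) =
      agmonLength m E U₁ (fun t => p + t • (q - p)) :=
  radial_segment_is_shortest_geodesic_general n m F E a hF ha c hhalf V hVcont hVneg hVsing hVedge
    hVout U₁ hU₁ S hS y₁ hy₁ p q hp hq
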